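/- Let λ₁, λ₂ : G → ℤ/4ℤ be surjective group homomorphisms whose restrictions to each finite cyclic subgroup ⟨b_j⟩, ⟨d_k⟩, ⟨e_l⟩, ⟨g_q⟩ are injective. Suppose there is an index j with λ₁(f_j) a generator of ℤ/4ℤ (i.e. equal to 1 or 3), while λ₂(f_i) is not a generator of ℤ/4ℤ for every index i. Then for every admissible automorphism α of G, λ₂∘α ≠ λ₁. -/

import Mathlib

/-! Compose `λ₂` with the reduction `ℤ/4 → ℤ/2`. The result kills every `e_i`, since `e_i` has
order 2 and the elements of order dividing 2 in `ℤ/4` are even, and every `f_i`, since no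
`λ₂(f_i)` is a generator. An admissible `α` sends `f_j` to a conjugate of `e^w f^{±1}`, so
`λ₂(α(f_j))` is even, whereas `λ₁(f_j)` is odd. -/

open Monoid

/-- Index type for the factors of the free product `G(r,s,t,m,n)`. -/
abbrev Idx (r s t m n : ℕ) := Fin r ⊕ Fin s ⊕ Fin t ⊕ Fin m ⊕ Fin n

/-- The factors: `r` copies of `ℤ`, `s` copies of `ℤ/4 × ℤ`, `t` copies of `ℤ/4`,
`m` copies of `ℤ/2 × ℤ`, and `n` copies of `ℤ/2` (written multiplicatively). -/
def Fac (r s t m n : ℕ) : Idx r s t m n → Type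
  | .inl _ => Multiplicative ℤ
  | .inr (.inl _) => Multiplicative (ZMod 4 × ℤ)
  | .inr (.inr (.inl _)) => Multiplicative (ZMod 4)
  | .inr (.inr (.inr (.inl _))) => Multiplicative (ZMod 2 × ℤ)
  | .inr (.inr (.inr (.inr _))) => Multiplicative (ZMod 2)

instance (r s t m n : ℕ) : (i : Idx r s t m n) → Group (Fac r s t m n i)
  | .inl _ => inferInstanceAs (Group (Multiplicative ℤ))
  | .inr (.inl _) => inferInstanceAs (Group (Multiplicative (ZMod 4 × ℤ)))
  | .inr (.inr (.inl _)) => inferInstanceAs (Group (Multiplicative (ZMod 4)))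
  | .inr (.inr (.inr (.inl _))) => inferInstanceAs (Group (Multiplicative (ZMod 2 × ℤ)))
  | .inr (.inr (.inr (.inr _))) => inferInstanceAs (Group (Multiplicative (ZMod 2)))

/-- The group `G(r,s,t,m,n)`, the free product of the factors above; this is the orbifold
fundamental group `π₁^orb(V(Γ(v),G(v)))`. -/
abbrev OrbGroup (r s t m n : ℕ) := Monoid.CoprodI (Fac r s t m n)

variable {r s t m n : ℕ}

/-- The free generator `a_i` of the `i`-th `ℤ` factor. -/
def genA (i : Fin r) : OrbGroup r s t m n :=
  CoprodI.of (show Fac r s t m n (.inl i) from Multiplicative.ofAdd (1 : ℤ))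

/-- The order-4 generator `b_j` of the `j`-th `ℤ/4 × ℤ` factor. -/
def genB (j : Fin s) : OrbGroup r s t m n :=
  CoprodI.of (show Fac r s t m n (.inr (.inl j)) from
    Multiplicative.ofAdd ((1, 0) : ZMod 4 × ℤ))

/-- The infinite-order generator `c_j` of the `j`-th `ℤ/4 × ℤ` factor. -/
def genC (j : Fin s) : OrbGroup r s t m n :=
  CoprodI.of (show Fac r s t m n (.inr (.inl j)) from
    Multiplicative.ofAdd ((0, 1) : ZMod 4 × ℤ))

/-- The order-4 generator `d_k` of the `k`-th `ℤ/4` factor. -/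
def genD (k : Fin t) : OrbGroup r s t m n :=
  CoprodI.of (show Fac r s t m n (.inr (.inr (.inl k))) from
    Multiplicative.ofAdd (1 : ZMod 4))

/-- The order-2 generator `e_l` of the `l`-th `ℤ/2 × ℤ` factor. -/
def genE (l : Fin m) : OrbGroup r s t m n :=
  CoprodI.of (show Fac r s t m n (.inr (.inr (.inr (.inl l)))) from
    Multiplicative.ofAdd ((1, 0) : ZMod 2 × ℤ))

/-- The infinite-order generator `f_l` of the `l`-th `ℤ/2 × ℤ` factor. -/
def genF (l : Fin m) : OrbGroup r s t m n :=
  CoprodI.of (show Fac r s t m n (.inr (.inr (.inr (.inl l)))) from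
    Multiplicative.ofAdd ((0, 1) : ZMod 2 × ℤ))

/-- The order-2 generator `g_q` of the `q`-th `ℤ/2` factor. -/
def genG (q : Fin n) : OrbGroup r s t m n :=
  CoprodI.of (show Fac r s t m n (.inr (.inr (.inr (.inr q)))) from
    Multiplicative.ofAdd (1 : ZMod 2))

/-- An automorphism of `G(r,s,t,m,n)` is admissible (the algebraic characterization of
realizable automorphisms from Lemma 2.2) if it sends each torsion-related generator to a
conjugate of the appropriate normal form. -/
def Admissible (α : OrbGroup r s t m n ≃* OrbGroup r s t m n) : Prop :=
  ∃ (σ : Equiv.Perm (Fin s)) (τ : Equiv.Perm (Fin t)) (γ : Equiv.Perm (Fin m))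
    (ξ : Equiv.Perm (Fin n))
    (x : Fin s → OrbGroup r s t m n) (y : Fin t → OrbGroup r s t m n)
    (u : Fin m → OrbGroup r s t m n) (z : Fin n → OrbGroup r s t m n)
    (ε : Fin s → ℤ) (δ : Fin t → ℤ) (ε' : Fin m → ℤ) (δ' : Fin n → ℤ)
    (v : Fin s → ℕ) (w : Fin m → ℕ),
    (∀ j, ε j = 1 ∨ ε j = -1) ∧ (∀ k, δ k = 1 ∨ δ k = -1) ∧
    (∀ l, ε' l = 1 ∨ ε' l = -1) ∧ (∀ q, δ' q = 1 ∨ δ' q = -1) ∧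
    (∀ j, v j < 4) ∧ (∀ l, w l < 2) ∧
    (∀ j, α (genB j) = x j * genB (σ j) ^ ε j * (x j)⁻¹) ∧
    (∀ j, α (genC j) = x j * genB (σ j) ^ v j * genC (σ j) ^ ε j * (x j)⁻¹) ∧
    (∀ k, α (genD k) = y k * genD (τ k) ^ δ k * (y k)⁻¹) ∧
    (∀ l, α (genE l) = u l * genE (γ l) ^ ε' l * (u l)⁻¹) ∧
    (∀ l, α (genF l) = u l * genE (γ l) ^ w l * genF (γ l) ^ ε' l * (u l)⁻¹) ∧
    (∀ q, α (genG q) = z q * genG (ξ q) ^ δ' q * (z q)⁻¹)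

/-- `λ` is "finite injective": its restriction to each finite cyclic subgroup
`⟨b_j⟩`, `⟨d_k⟩`, `⟨e_l⟩`, `⟨g_q⟩` is injective. -/
def InjOnTorsion {r s t m n : ℕ}
    (lam : OrbGroup r s t m n →* Multiplicative (ZMod 4)) : Prop :=
  (∀ j : Fin s, Set.InjOn lam
    ((Subgroup.zpowers (genB j) : Subgroup (OrbGroup r s t m n)) : Set (OrbGroup r s t m n))) ∧
  (∀ k : Fin t, Set.InjOn lam
    ((Subgroup.zpowers (genD k) : Subgroup (OrbGroup r s t m n)) : Set (OrbGroup r s t m n))) ∧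
  (∀ l : Fin m, Set.InjOn lam
    ((Subgroup.zpowers (genE l) : Subgroup (OrbGroup r s t m n)) : Set (OrbGroup r s t m n))) ∧
  (∀ q : Fin n, Set.InjOn lam
    ((Subgroup.zpowers (genG q) : Subgroup (OrbGroup r s t m n)) : Set (OrbGroup r s t m n)))

theorem genE_sq (l : Fin m) : (genE l : OrbGroup r s t m n) ^ 2 = 1 := by
  have h : Multiplicative.ofAdd ((1, 0) : ZMod 2 × ℤ) ^ 2 = 1 := by decide
  rw [genE, ← map_pow, ← map_one CoprodI.of]
  exact congrArg CoprodI.of h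

theorem Admissible.map_genF_eq_one {C : Type*} [CommGroup C]
    {α : OrbGroup r s t m n ≃* OrbGroup r s t m n} (hα : Admissible α)
    (φ : OrbGroup r s t m n →* C) (hE : ∀ i, φ (genE i) = 1) (hF : ∀ i, φ (genF i) = 1)
    (l : Fin m) : φ (α (genF l)) = 1 := by
  obtain ⟨-, -, γ, -, -, -, u, -, -, -, ε', -, -, w, -, -, -, -, -, -, -, -, -, -, hαF, -⟩ := hα
  rw [hαF l, map_mul, map_mul, map_mul, map_pow, map_zpow, hE, hF, one_pow, one_zpow, mul_one,
    mul_one, map_inv, mul_inv_cancel]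

def castZMod2 : Multiplicative (ZMod 4) →* Multiplicative (ZMod 2) :=
  (ZMod.castHom (by norm_num : 2 ∣ 4) (ZMod 2)).toAddMonoidHom.toMultiplicative

theorem castZMod2_eq_one_iff (x : Multiplicative (ZMod 4)) :
    castZMod2 x = 1 ↔ ¬(x = Multiplicative.ofAdd 1 ∨ x = Multiplicative.ofAdd 3) := by
  revert x
  decide

theorem castZMod2_eq_one_of_sq_eq_one {x : Multiplicative (ZMod 4)} (hx : x ^ 2 = 1) :
    castZMod2 x = 1 := by
  revert x
  decide

theorem not_equivalent_of_f_generator {r s t m n : ℕ}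
    (lam1 lam2 : OrbGroup r s t m n →* Multiplicative (ZMod 4))
    (h1 : ∃ j : Fin m, lam1 (genF j) = Multiplicative.ofAdd (1 : ZMod 4) ∨
      lam1 (genF j) = Multiplicative.ofAdd (3 : ZMod 4))
    (h2 : ∀ i : Fin m, ¬(lam2 (genF i) = Multiplicative.ofAdd (1 : ZMod 4) ∨
      lam2 (genF i) = Multiplicative.ofAdd (3 : ZMod 4))) :
    ∀ α : OrbGroup r s t m n ≃* OrbGroup r s t m n, Admissible α →
      lam2.comp α.toMonoidHom ≠ lam1 := by
  intro α hα hcomp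
  obtain ⟨j, hj⟩ := h1
  have hE : ∀ i, castZMod2.comp lam2 (genE i) = 1 := fun i =>
    castZMod2_eq_one_of_sq_eq_one (by rw [← map_pow, genE_sq, map_one])
  have hF : ∀ i, castZMod2.comp lam2 (genF i) = 1 := fun i =>
    (castZMod2_eq_one_iff _).2 (h2 i)
  have hαF := hα.map_genF_eq_one _ hE hF j
  rw [← DFunLike.congr_fun hcomp (genF j)] at hj
  exact (castZMod2_eq_one_iff _).1 hαF hj
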